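/- arXiv:2003.13561 — 3 statements merged into one kernel-verified Lean document; each statement's English description precedes it below -/
import Mathlib

section
/- For a p-biased random walk with p > 1/2, the last time T the walk visits its bottommost point satisfies the tail bound P(T ≥ t) ≤ (1 + sqrt(2)) (4pq)^{t/2} for every nonnegative integer t, where q = 1-p. -/
/-!
On the event `t ≤ T` the walk is `≤ 0` at some time `s ≥ t`, since its minimum is at most
`S 0 = 0`. Let `h t x` be the probability that the walk started at `x` is `≤ 0` at some time
`≥ t`. Conditioning on the first step gives `h (t + 1) x = p h t (x + 1) + q h t (x - 1)`, and
`h 0 x ≤ (q / p) ^ x` for `x ≥ 0` because `(q / p) ^ x` is harmonic for the walk (gambler's ruin).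
Induction on `t` then gives `h t x ≤ r ^ x (p r + q / r) ^ t` for `r = √(q / p)`, where
`p r + q / r = √(4 p q)`; so `P(T ≥ t) ≤ (4 p q) ^ (t / 2)`. Up to any finite horizon `n` these
probabilities are weighted sums over the `2 ^ n` sign patterns of the first `n` steps.
-/

open MeasureTheory ProbabilityTheory

namespace BiasedWalk

open Finset

lemma sum_pi_fin_succ {α M : Type*} [Fintype α] [AddCommMonoid M] {n : ℕ}
    (f : (Fin (n + 1) → α) → M) :
    ∑ z, f z = ∑ a, ∑ y : Fin n → α, f (Fin.cons a y) := by
  rw [← (Fin.consEquiv fun _ ↦ α).sum_comp, Fintype.sum_prod_type]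
  rfl

def step (b : Bool) : ℤ := if b then 1 else -1

def pathWeight (p q : ℝ) {n : ℕ} (z : Fin n → Bool) : ℝ := ∏ i, if z i then p else q

def position {n : ℕ} (z : Fin n → Bool) (s : ℕ) : ℤ :=
  ∑ i : Fin n, if (i : ℕ) < s then step (z i) else 0

open Classical in
noncomputable def hitProb (p q : ℝ) (n t : ℕ) (x : ℤ) : ℝ :=
  ∑ z : Fin n → Bool with ∃ s, t ≤ s ∧ s ≤ n ∧ x + position z s ≤ 0, pathWeight p q z

section Paths

variable {p q : ℝ} {n t : ℕ} {x : ℤ}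

lemma pathWeight_nonneg (hp : 0 ≤ p) (hq : 0 ≤ q) (z : Fin n → Bool) : 0 ≤ pathWeight p q z :=
  prod_nonneg fun i _ ↦ by split <;> assumption

lemma pathWeight_cons (b : Bool) (y : Fin n → Bool) :
    pathWeight p q (Fin.cons b y) = (if b then p else q) * pathWeight p q y := by
  simp [pathWeight, Fin.prod_univ_succ]

lemma sum_pathWeight (hpq : p + q = 1) : ∑ z : Fin n → Bool, pathWeight p q z = 1 := by
  classical
  simp only [pathWeight]
  rw [← Fintype.prod_sum fun (_ : Fin n) (b : Bool) ↦ if b then p else q]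
  simp [hpq]

@[simp] lemma position_zero (z : Fin n → Bool) : position z 0 = 0 := by simp [position]

lemma position_cons_succ (b : Bool) (y : Fin n → Bool) (s : ℕ) :
    position (Fin.cons b y) (s + 1) = step b + position y s := by
  simp [position, Fin.sum_univ_succ]

lemma hitProb_le_one (hp : 0 ≤ p) (hq : 0 ≤ q) (hpq : p + q = 1) : hitProb p q n t x ≤ 1 := by
  classical
  exact (sum_le_sum_of_subset_of_nonneg (filter_subset _ _)
    fun z _ _ ↦ pathWeight_nonneg hp hq z).trans_eq (sum_pathWeight hpq)

lemma hitProb_zero (h : 0 < t ∨ 0 < x) : hitProb p q 0 t x = 0 := by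
  classical
  refine sum_eq_zero fun z hz ↦ ?_
  obtain ⟨s, hts, hs, hx⟩ := (mem_filter.mp hz).2
  obtain rfl : s = 0 := by omega
  rw [position_zero] at hx
  omega

/-- At `t = 0` the truncated `t - 1` is again `0`, which is right: time `0` is excluded by
`0 < x`. -/
lemma hitProb_succ (h : 0 < t ∨ 0 < x) :
    hitProb p q (n + 1) t x =
      p * hitProb p q n (t - 1) (x + 1) + q * hitProb p q n (t - 1) (x - 1) := by
  classical
  have hcons : ∀ b (y : Fin n → Bool),
      (∃ s, t ≤ s ∧ s ≤ n + 1 ∧ x + position (Fin.cons b y) s ≤ 0) ↔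
        ∃ s, t - 1 ≤ s ∧ s ≤ n ∧ x + step b + position y s ≤ 0 := by
    intro b y
    constructor
    · rintro ⟨_ | s, hts, hs, hx⟩
      · rw [position_zero] at hx
        omega
      · rw [position_cons_succ] at hx
        exact ⟨s, by omega, by omega, by omega⟩
    · rintro ⟨s, hts, hs, hx⟩
      exact ⟨s + 1, by omega, by omega, by rw [position_cons_succ]; omega⟩
  simp only [hitProb, sum_filter, sum_pi_fin_succ, hcons, pathWeight_cons, Fintype.sum_bool,
    mul_sum, mul_ite, mul_zero]
  simp [step, sub_eq_add_neg]

lemma hitProb_le_pow_toNat (hp : 0 < p) (hq : 0 ≤ q) (hpq : p + q = 1) :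
    hitProb p q n 0 x ≤ (q / p) ^ x.toNat := by
  induction n generalizing x with
  | zero =>
    rcases le_or_gt x 0 with hx | hx
    · simpa [Int.toNat_of_nonpos hx] using hitProb_le_one hp.le hq hpq
    · rw [hitProb_zero (Or.inr hx)]
      positivity
  | succ n ih =>
    rcases le_or_gt x 0 with hx | hx
    · simpa [Int.toNat_of_nonpos hx] using hitProb_le_one hp.le hq hpq
    obtain ⟨k, rfl⟩ : ∃ k : ℕ, x = k + 1 := ⟨(x - 1).toNat, by omega⟩
    rw [hitProb_succ (Or.inr hx)]
    calc p * hitProb p q n 0 (k + 1 + 1) + q * hitProb p q n 0 (k + 1 - 1)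
        ≤ p * (q / p) ^ (k + 2) + q * (q / p) ^ k := by
          gcongr <;> exact ih.trans_eq (by congr 1 <;> omega)
      _ = (q / p) ^ k * (p * (q / p) ^ 2 + q) := by ring
      _ = (q / p) ^ (k + 1) := by
          rw [pow_succ]
          congr 1
          field_simp
          linear_combination q * hpq
      _ = (q / p) ^ ((k : ℤ) + 1).toNat := by congr 1

lemma hitProb_le_zpow_mul_pow {r : ℝ} (hp : 0 < p) (hq : 0 ≤ q) (hpq : p + q = 1) (hr0 : 0 < r)
    (hqr : q / p ≤ r) (hr1 : r ≤ 1) :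
    hitProb p q n t x ≤ r ^ x * (p * r + q / r) ^ t := by
  induction t generalizing n x with
  | zero =>
    rw [pow_zero, mul_one]
    refine (hitProb_le_pow_toNat hp hq hpq).trans ?_
    rcases le_or_gt x 0 with hx | hx
    · rw [Int.toNat_of_nonpos hx, pow_zero]
      exact one_le_zpow_of_nonpos₀ hr0 hr1 hx
    · calc (q / p) ^ x.toNat ≤ r ^ x.toNat := pow_le_pow_left₀ (by positivity) hqr _
        _ = r ^ x := by rw [← zpow_natCast, Int.toNat_of_nonneg hx.le]
  | succ t ih =>
    cases n with
    | zero =>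
      rw [hitProb_zero (Or.inl t.succ_pos)]
      positivity
    | succ n =>
      rw [hitProb_succ (Or.inl t.succ_pos), Nat.add_one_sub_one]
      calc p * hitProb p q n t (x + 1) + q * hitProb p q n t (x - 1)
          ≤ p * (r ^ (x + 1) * (p * r + q / r) ^ t) + q * (r ^ (x - 1) * (p * r + q / r) ^ t) := by
            gcongr <;> exact ih
        _ = r ^ x * (p * r + q / r) ^ (t + 1) := by
            rw [zpow_add₀ hr0.ne', zpow_sub₀ hr0.ne', zpow_one]
            ring

lemma hitProb_eq_zero_of_q_eq_zero (hq : q = 0) (h : 0 < x + t) : hitProb p q n t x = 0 := by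
  induction n generalizing t x with
  | zero => exact hitProb_zero (by omega)
  | succ n ih =>
    rw [hitProb_succ (by omega), ih (by omega), hq]
    ring

lemma hitProb_le_sqrt_pow (hqp : q ≤ p) (hq : 0 ≤ q) (hpq : p + q = 1) :
    hitProb p q n t 0 ≤ √(4 * p * q) ^ t := by
  have hp : 0 < p := by linarith
  rcases hq.eq_or_lt with rfl | hq
  · rcases t.eq_zero_or_pos with rfl | ht
    · simpa using hitProb_le_one hp.le le_rfl hpq
    · rw [hitProb_eq_zero_of_q_eq_zero rfl (by omega)]
      positivity
  have hqp1 : q / p ≤ 1 := (div_le_one hp).mpr hqp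
  set r := √(q / p)
  have hr0 : 0 < r := by positivity
  have hr : p * r + q / r = √(4 * p * q) := by
    have hq' : q = p * r ^ 2 := by
      rw [Real.sq_sqrt (by positivity)]
      field_simp
    rw [hq', show 4 * p * (p * r ^ 2) = (2 * p * r) ^ 2 by ring, Real.sqrt_sq (by positivity)]
    field_simp
    ring
  simpa [hr] using hitProb_le_zpow_mul_pow (x := 0) (n := n) (t := t) hp hq.le hpq hr0
    (Real.le_sqrt_self_iff.mpr hqp1) (Real.sqrt_le_one.mpr hqp1)

end Paths

def signs {Ω : Type*} (Z : ℕ → Ω → ℤ) (n : ℕ) (ω : Ω) : Fin n → Bool := fun i ↦ Z i ω = 1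

lemma position_signs {Ω : Type*} {Z : ℕ → Ω → ℤ} {ω : Ω} (hω : ∀ i, Z i ω = 1 ∨ Z i ω = -1)
    {n s : ℕ} (hs : s ≤ n) :
    position (signs Z n ω) s = ∑ i ∈ range s, Z i ω := by
  have hstep (i : ℕ) : step (Z i ω = 1) = Z i ω := by
    rcases hω i with h | h <;> simp [step, h]
  simp only [position, signs, hstep]
  rw [Fin.sum_univ_eq_sum_range (fun i ↦ if i < s then Z i ω else 0), ← sum_filter]
  congr 1
  ext i
  simp only [mem_filter, mem_range]
  omega

section Walk

variable {Ω : Type*} [MeasurableSpace Ω] {μ : Measure Ω} [IsProbabilityMeasure μ] {p q : ℝ}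
  {Z : ℕ → Ω → ℤ}

lemma measurable_signs (hmeas : ∀ i, Measurable (Z i)) (n : ℕ) : Measurable (signs Z n) :=
  measurable_pi_lambda _ fun i ↦ (Measurable.of_discrete (f := fun k : ℤ ↦ decide (k = 1))).comp
    (hmeas i)

lemma measure_signs_preimage_singleton (hmeas : ∀ i, Measurable (Z i)) (hindep : iIndepFun Z μ)
    (hup : ∀ i, μ {ω | Z i ω = 1} = ENNReal.ofReal p) (hp : 0 ≤ p) (hq : 0 ≤ q)
    (hpq : p + q = 1) {n : ℕ} (z : Fin n → Bool) :
    μ (signs Z n ⁻¹' {z}) = ENNReal.ofReal (pathWeight p q z) := by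
  have hcyl : signs Z n ⁻¹' {z} = ⋂ i : Fin n, Z i ⁻¹' {k | decide (k = 1) = z i} := by
    ext ω
    simp [signs, funext_iff]
  have hfactor (i : Fin n) :
      μ (Z i ⁻¹' {k | decide (k = 1) = z i}) = ENNReal.ofReal (if z i then p else q) := by
    have hmeas_up : MeasurableSet {ω | Z i ω = 1} := hmeas i (measurableSet_singleton 1)
    cases z i
    · have hcompl : Z i ⁻¹' {k | decide (k = 1) = false} = {ω | Z i ω = 1}ᶜ := by ext; simp
      rw [hcompl, prob_compl_eq_one_sub hmeas_up, hup,
        ← ENNReal.ofReal_one, ← ENNReal.ofReal_sub _ hp, ← hpq, add_sub_cancel_left]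
      rfl
    · simp only [decide_eq_true_eq, if_true]
      exact hup i
  rw [hcyl, (hindep.precomp Fin.val_injective).meas_iInter fun i ↦ ⟨_, .of_discrete, rfl⟩,
    Finset.prod_congr rfl fun i _ ↦ hfactor i, pathWeight,
    ENNReal.ofReal_prod_of_nonneg fun i _ ↦ by split <;> assumption]

lemma ae_eq_one_or_eq_neg_one (hmeas : ∀ i, Measurable (Z i))
    (hup : ∀ i, μ {ω | Z i ω = 1} = ENNReal.ofReal p)
    (hdown : ∀ i, μ {ω | Z i ω = -1} = ENNReal.ofReal q) (hp : 0 ≤ p) (hq : 0 ≤ q)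
    (hpq : p + q = 1) : ∀ᵐ ω ∂μ, ∀ i, Z i ω = 1 ∨ Z i ω = -1 := by
  refine ae_all_iff.mpr fun i ↦ ?_
  have hdisj : Disjoint {ω | Z i ω = 1} {ω | Z i ω = -1} :=
    Set.disjoint_left.mpr fun ω h1 h2 ↦ by simp_all
  have hmeas_up : MeasurableSet {ω | Z i ω = 1} := hmeas i (measurableSet_singleton _)
  have hmeas_down : MeasurableSet {ω | Z i ω = -1} := hmeas i (measurableSet_singleton _)
  have hunion : μ ({ω | Z i ω = 1} ∪ {ω | Z i ω = -1}) = 1 := by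
    rw [measure_union hdisj hmeas_down, hup, hdown, ← ENNReal.ofReal_add hp hq, hpq,
      ENNReal.ofReal_one]
  exact (mem_ae_iff_prob_eq_one (hmeas_up.union hmeas_down)).mpr hunion

lemma measure_exists_sum_le_zero (hmeas : ∀ i, Measurable (Z i)) (hindep : iIndepFun Z μ)
    (hup : ∀ i, μ {ω | Z i ω = 1} = ENNReal.ofReal p)
    (hdown : ∀ i, μ {ω | Z i ω = -1} = ENNReal.ofReal q) (hp : 0 ≤ p) (hq : 0 ≤ q)
    (hpq : p + q = 1) (n t : ℕ) :
    μ {ω | ∃ s, t ≤ s ∧ s ≤ n ∧ ∑ i ∈ range s, Z i ω ≤ 0} =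
      ENNReal.ofReal (hitProb p q n t 0) := by
  classical
  set P := {z : Fin n → Bool | ∃ s, t ≤ s ∧ s ≤ n ∧ 0 + position z s ≤ 0}
  have hae : {ω | ∃ s, t ≤ s ∧ s ≤ n ∧ ∑ i ∈ range s, Z i ω ≤ 0} =ᵐ[μ] signs Z n ⁻¹' P := by
    filter_upwards [ae_eq_one_or_eq_neg_one hmeas hup hdown hp hq hpq] with ω hω
    refine propext (exists_congr fun s ↦ and_congr_right fun _ ↦ and_congr_right fun hs ↦ ?_)
    rw [zero_add, position_signs hω hs]
  rw [measure_congr hae, ← Set.coe_toFinset P, ← sum_measure_preimage_singleton _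
    fun z _ ↦ measurable_signs hmeas n (measurableSet_singleton z), hitProb,
    ENNReal.ofReal_sum_of_nonneg fun z _ ↦ pathWeight_nonneg hp hq z, Set.toFinset_ofPred]
  exact sum_congr rfl fun z _ ↦ measure_signs_preimage_singleton hmeas hindep hup hp hq hpq z

lemma measure_exists_ge_sum_le_zero_le (hmeas : ∀ i, Measurable (Z i)) (hindep : iIndepFun Z μ)
    (hup : ∀ i, μ {ω | Z i ω = 1} = ENNReal.ofReal p)
    (hdown : ∀ i, μ {ω | Z i ω = -1} = ENNReal.ofReal q) (hqp : q ≤ p) (hq : 0 ≤ q)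
    (hpq : p + q = 1) (t : ℕ) :
    μ {ω | ∃ s, t ≤ s ∧ ∑ i ∈ range s, Z i ω ≤ 0} ≤ ENNReal.ofReal (√(4 * p * q) ^ t) := by
  have hmono : Monotone fun n ↦ {ω | ∃ s, t ≤ s ∧ s ≤ n ∧ ∑ i ∈ range s, Z i ω ≤ 0} :=
    fun m n hmn ω ⟨s, hts, hsm, hs⟩ ↦ ⟨s, hts, hsm.trans hmn, hs⟩
  have hunion : {ω | ∃ s, t ≤ s ∧ ∑ i ∈ range s, Z i ω ≤ 0} =
      ⋃ n, {ω | ∃ s, t ≤ s ∧ s ≤ n ∧ ∑ i ∈ range s, Z i ω ≤ 0} := by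
    ext ω
    simp only [Set.mem_ofPred_eq, Set.mem_iUnion]
    exact ⟨fun ⟨s, hts, hs⟩ ↦ ⟨s, s, hts, le_rfl, hs⟩, fun ⟨_, s, hts, _, hs⟩ ↦ ⟨s, hts, hs⟩⟩
  rw [hunion, hmono.measure_iUnion]
  refine iSup_le fun n ↦ ?_
  rw [measure_exists_sum_le_zero hmeas hindep hup hdown (by linarith) hq hpq]
  exact ENNReal.ofReal_le_ofReal (hitProb_le_sqrt_pow hqp hq hpq)

end Walk

lemma exists_le_zero_of_le_sSup_argmin {f : ℕ → ℤ} (h0 : f 0 = 0) {t : ℕ}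
    (ht : t ≤ sSup {s | f s = sInf (Set.range f)}) : ∃ s, t ≤ s ∧ f s ≤ 0 := by
  have hinf : sInf (Set.range f) ≤ 0 := by
    by_cases hbdd : BddBelow (Set.range f)
    · exact h0 ▸ csInf_le hbdd ⟨0, rfl⟩
    · rw [Int.csInf_of_not_bddBelow hbdd]
  set A := {s | f s = sInf (Set.range f)}
  rcases t.eq_zero_or_pos with rfl | htpos
  · exact ⟨0, le_rfl, h0.le⟩
  by_cases hbdd : BddAbove A
  · have hne : A.Nonempty := by
      by_contra hA
      rw [Set.not_nonempty_iff_eq_empty.mp hA, csSup_empty, Nat.bot_eq_zero] at ht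
      omega
    exact ⟨sSup A, ht, (Nat.sSup_mem hne hbdd).trans_le hinf⟩
  · obtain ⟨s, hs, hts⟩ := not_bddAbove_iff.mp hbdd t
    exact ⟨s, hts.le, hs.trans_le hinf⟩

end BiasedWalk

open BiasedWalk

/-- For a `p`-biased random walk with `p > 1/2`, the last time `T` the walk visits its
bottommost point satisfies `P(T ≥ t) ≤ (1 + √2) (4pq)^{t/2}` for every `t : ℕ`, `q = 1-p`. -/
theorem biased_walk_tail_last_min {Ω : Type*} [MeasurableSpace Ω] (μ : Measure Ω)
    [IsProbabilityMeasure μ] (p q : ℝ) (hp : 1 / 2 < p) (hp1 : p ≤ 1) (hq : q = 1 - p)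
    (Z : ℕ → Ω → ℤ) (hmeas : ∀ i, Measurable (Z i))
    (hindep : iIndepFun Z μ)
    (hup : ∀ i, μ {ω | Z i ω = 1} = ENNReal.ofReal p)
    (hdown : ∀ i, μ {ω | Z i ω = -1} = ENNReal.ofReal q)
    (S : Ω → ℕ → ℤ) (hS : ∀ ω t, S ω t = ∑ i ∈ Finset.range t, Z i ω)
    (B : Ω → ℤ) (hB : ∀ ω, B ω = sInf (Set.range (S ω)))
    (T : Ω → ℕ) (hT : ∀ ω, T ω = sSup {t : ℕ | S ω t = B ω}) (t : ℕ) :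
    μ {ω | t ≤ T ω} ≤ ENNReal.ofReal ((1 + Real.sqrt 2) * (4 * p * q) ^ ((t : ℝ) / 2)) := by
  have hq0 : 0 ≤ q := by linarith
  have hqp : q ≤ p := by linarith
  have hpq : p + q = 1 := by linarith
  have hlast (ω : Ω) (hω : t ≤ T ω) : ∃ s, t ≤ s ∧ ∑ i ∈ Finset.range s, Z i ω ≤ 0 := by
    simp only [hT, hB] at hω
    simpa only [hS] using exists_le_zero_of_le_sSup_argmin (by simp [hS]) hω
  have hpow : √(4 * p * q) ^ t = (4 * p * q) ^ ((t : ℝ) / 2) := by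
    rw [Real.sqrt_eq_rpow, ← Real.rpow_natCast, ← Real.rpow_mul (by positivity)]
    ring_nf
  calc μ {ω | t ≤ T ω} ≤ μ {ω | ∃ s, t ≤ s ∧ ∑ i ∈ Finset.range s, Z i ω ≤ 0} :=
        measure_mono hlast
    _ ≤ ENNReal.ofReal (√(4 * p * q) ^ t) :=
        measure_exists_ge_sum_le_zero_le hmeas hindep hup hdown hqp hq0 hpq t
    _ ≤ _ := by
        rw [hpow]
        exact ENNReal.ofReal_le_ofReal (le_mul_of_one_le_left (by positivity)
          (le_add_of_nonneg_right (Real.sqrt_nonneg 2)))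
end

section
/- For a binomial random variable X ~ B(n, p) and integer k with p < k/n < 1, P(X ≥ k) ≥ (1/√(2n)) · exp(-n · D(k/n || p)), where D(x||y) = x log(x/y) + (1-x) log((1-x)/(1-y)) is the relative entropy. -/
/-!
The tail is at least its first term `C(n,k) pᵏ (1-p)ⁿ⁻ᵏ`, and
`exp (-n D(k/n ‖ p)) = nⁿ pᵏ (1-p)ⁿ⁻ᵏ / (kᵏ (n-k)ⁿ⁻ᵏ)`, so it suffices that
`C(n,k) ≥ nⁿ / (√(2n) kᵏ (n-k)ⁿ⁻ᵏ)`. Writing each factorial as `m! = sₘ √(2m) (m/e)ᵐ` with the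
Stirling sequence `sₘ`, this becomes `sₖ sⱼ √(kj) ≤ sₙ n` for `j = n - k`. Since `sₘ` decreases to
`√π`, it is enough to compare `sₖ sⱼ √(kj)` with `√π n`, using `s₁ = e/√2`, `s₂ = e²/4` and
`kj ≤ n²/4`.
-/

/-- Binary relative entropy `D(x‖y)`. -/
noncomputable def relEntropy (x y : ℝ) : ℝ :=
  x * Real.log (x / y) + (1 - x) * Real.log ((1 - x) / (1 - y))

open Real

namespace Stirling

lemma stirlingSeq_nonneg (m : ℕ) : 0 ≤ stirlingSeq m := by
  unfold stirlingSeq; positivity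

lemma stirlingSeq_le_of_le {m n : ℕ} (hm : m ≠ 0) (hmn : m ≤ n) :
    stirlingSeq n ≤ stirlingSeq m := by
  obtain ⟨m, rfl⟩ := Nat.exists_eq_succ_of_ne_zero hm
  obtain ⟨n, rfl⟩ : ∃ n', n = n' + 1 := ⟨n - 1, by omega⟩
  exact stirlingSeq'_antitone (by omega : m ≤ n)

lemma stirlingSeq_two : stirlingSeq 2 = exp 1 ^ 2 / 4 := by
  rw [stirlingSeq, show (2 * (2 : ℕ) : ℝ) = 2 ^ 2 by norm_num, sqrt_sq zero_le_two]
  field_simp [Nat.factorial]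
  ring

lemma factorial_mul_exp_pow_div_pow {m : ℕ} (hm : m ≠ 0) :
    (m.factorial : ℝ) * exp 1 ^ m / (m : ℝ) ^ m = stirlingSeq m * √(2 * m) := by
  rw [stirlingSeq, div_pow]
  field_simp

-- `3.7 > e² / 2 = stirlingSeq 1 ^ 2`
lemma stirlingSeq_sq_le_of_ne_zero {m : ℕ} (hm : m ≠ 0) : stirlingSeq m ^ 2 ≤ 3.7 := by
  have h := stirlingSeq_le_of_le one_ne_zero (Nat.one_le_iff_ne_zero.2 hm)
  rw [stirlingSeq_one] at h
  calc stirlingSeq m ^ 2 ≤ (exp 1 / √2) ^ 2 := pow_le_pow_left₀ (stirlingSeq_nonneg m) h 2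
    _ = exp 1 ^ 2 / 2 := by rw [div_pow, sq_sqrt zero_le_two]
    _ ≤ 3.7 := by nlinarith [exp_one_lt_d9, exp_pos 1]

-- `3.42 > e⁴ / 16 = stirlingSeq 2 ^ 2`
lemma stirlingSeq_sq_le_of_two_le {m : ℕ} (hm : 2 ≤ m) : stirlingSeq m ^ 2 ≤ 3.42 := by
  have h := stirlingSeq_le_of_le two_ne_zero hm
  rw [stirlingSeq_two] at h
  have he2 : exp 1 ^ 2 < 7.39 := by nlinarith [exp_one_lt_d9, exp_pos 1]
  calc stirlingSeq m ^ 2 ≤ (exp 1 ^ 2 / 4) ^ 2 := pow_le_pow_left₀ (stirlingSeq_nonneg m) h 2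
    _ ≤ 3.42 := by nlinarith [pow_pos (exp_pos 1) 2]

lemma stirlingSeq_mul_stirlingSeq_sq_le {k j : ℕ} (hk : k ≠ 0) (hj : j ≠ 0) (hkj : 3 ≤ k + j) :
    (stirlingSeq k * stirlingSeq j) ^ 2 * (k * j) ≤ π * (k + j) ^ 2 := by
  wlog hle : k ≤ j generalizing k j
  · linarith [this hj hk (by omega) (by omega)]
  have hπ := pi_gt_d2
  rw [mul_pow]
  rcases Nat.lt_or_ge k 2 with hk1 | hk2
  · obtain rfl : k = 1 := by omega
    have hj2 : (2 : ℝ) ≤ j := by exact_mod_cast (by omega : 2 ≤ j)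
    have := mul_le_mul (stirlingSeq_sq_le_of_ne_zero one_ne_zero)
      (stirlingSeq_sq_le_of_two_le (by omega : 2 ≤ j)) (sq_nonneg _) (by norm_num)
    push_cast
    nlinarith
  · have := mul_le_mul (stirlingSeq_sq_le_of_two_le hk2)
      (stirlingSeq_sq_le_of_two_le (hk2.trans hle)) (sq_nonneg _) (by norm_num)
    have hkj4 : 4 * ((k : ℝ) * j) ≤ (k + j) ^ 2 := by nlinarith [sq_nonneg ((k : ℝ) - j)]
    nlinarith [mul_le_mul_of_nonneg_right this (by positivity : (0 : ℝ) ≤ k * j)]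

lemma stirlingSeq_mul_sqrt_mul_le {k j : ℕ} (hk : k ≠ 0) (hj : j ≠ 0) (hkj : 3 ≤ k + j) :
    stirlingSeq k * √(2 * k) * (stirlingSeq j * √(2 * j)) ≤ 2 * √π * (k + j) := by
  have := stirlingSeq_nonneg k
  have := stirlingSeq_nonneg j
  rw [← pow_le_pow_iff_left₀ (by positivity) (by positivity) two_ne_zero]
  calc (stirlingSeq k * √(2 * k) * (stirlingSeq j * √(2 * j))) ^ 2
      = 4 * ((stirlingSeq k * stirlingSeq j) ^ 2 * (k * j)) := by
        simp only [mul_pow, sq_sqrt (by positivity : (0 : ℝ) ≤ 2 * k),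
          sq_sqrt (by positivity : (0 : ℝ) ≤ 2 * j)]
        ring
    _ ≤ 4 * (π * (k + j) ^ 2) := by
        gcongr 4 * ?_
        exact stirlingSeq_mul_stirlingSeq_sq_le hk hj hkj
    _ = (2 * √π * (k + j)) ^ 2 := by rw [mul_pow, mul_pow, sq_sqrt pi_pos.le]; ring

end Stirling

open Stirling in
lemma entropy_div_sqrt_le_choose {k j : ℕ} (hk : k ≠ 0) (hj : j ≠ 0) :
    ((k + j : ℕ) : ℝ) ^ (k + j) / (√(2 * (k + j : ℕ)) * k ^ k * j ^ j) ≤ (k + j).choose k := by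
  rcases Nat.lt_or_ge (k + j) 3 with h2 | h3
  -- `k = j = 1` is the equality case, out of reach of the Stirling estimates.
  · obtain ⟨rfl, rfl⟩ : k = 1 ∧ j = 1 := by omega
    rw [show (2 * ((1 + 1 : ℕ) : ℝ)) = 2 ^ 2 by norm_num, sqrt_sq zero_le_two]
    norm_num
  set n := k + j with hn
  have hfac : (n.factorial : ℝ) = n.choose k * k.factorial * j.factorial := by
    rw [← Nat.add_sub_cancel_left (n := k) (m := j), ← hn]
    exact_mod_cast (Nat.choose_mul_factorial_mul_factorial (Nat.le_add_right k j)).symm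
  have hratio : (n.choose k : ℝ) * k ^ k * j ^ j / n ^ n
      = stirlingSeq n * √(2 * n) / (stirlingSeq k * √(2 * k) * (stirlingSeq j * √(2 * j))) := by
    rw [← factorial_mul_exp_pow_div_pow hk, ← factorial_mul_exp_pow_div_pow hj,
      ← factorial_mul_exp_pow_div_pow (by omega : n ≠ 0), hfac, hn, pow_add (exp 1) k j]
    field_simp
  have hpos : ∀ m, m ≠ 0 → 0 < stirlingSeq m := fun m hm =>
    (sqrt_pos.2 pi_pos).trans_le (sqrt_pi_le_stirlingSeq hm)
  have key : 1 / √(2 * n)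
      ≤ stirlingSeq n * √(2 * n) / (stirlingSeq k * √(2 * k) * (stirlingSeq j * √(2 * j))) := by
    have := hpos k hk
    have := hpos j hj
    rw [div_le_div_iff₀ (by positivity) (by positivity), one_mul, mul_assoc (stirlingSeq n),
      mul_self_sqrt (by positivity)]
    calc stirlingSeq k * √(2 * k) * (stirlingSeq j * √(2 * j))
        ≤ 2 * √π * n := by push_cast [hn]; exact stirlingSeq_mul_sqrt_mul_le hk hj h3
      _ ≤ stirlingSeq n * (2 * n) := by nlinarith [sqrt_pi_le_stirlingSeq (by omega : n ≠ 0)]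
  calc (n : ℝ) ^ n / (√(2 * n) * k ^ k * j ^ j)
      = n ^ n / (k ^ k * j ^ j) * (1 / √(2 * n)) := by ring
    _ ≤ n ^ n / (k ^ k * j ^ j) * ((n.choose k : ℝ) * k ^ k * j ^ j / n ^ n) := by
        rw [hratio]; gcongr
    _ = n.choose k := by field_simp

lemma exp_neg_mul_relEntropy {k j : ℕ} (hk : k ≠ 0) (hj : j ≠ 0) {p : ℝ} (hp0 : 0 < p)
    (hp1 : p < 1) :
    exp (-((k + j : ℕ) : ℝ) * relEntropy (k / (k + j : ℕ)) p)
      = ((k + j : ℕ) : ℝ) ^ (k + j) / (k ^ k * j ^ j) * (p ^ k * (1 - p) ^ j) := by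
  have hq : 0 < 1 - p := sub_pos.2 hp1
  push_cast
  have hlog : -((k : ℝ) + j) * relEntropy (k / (k + j)) p
      = k * log ((k + j) * p / k) + j * log ((k + j) * (1 - p) / j) := by
    have h1 : (k : ℝ) / (k + j) / p = ((k + j) * p / k)⁻¹ := by field_simp
    have h2 : (1 - (k : ℝ) / (k + j)) / (1 - p) = ((k + j) * (1 - p) / j)⁻¹ := by
      field_simp; ring
    have h3 : 1 - (k : ℝ) / (k + j) = j / (k + j) := by field_simp; ring
    rw [relEntropy, h1, h2, log_inv, log_inv, h3]
    field_simp
    ring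
  rw [hlog, exp_add, exp_nat_mul, exp_nat_mul, exp_log (by positivity), exp_log (by positivity),
    div_pow, div_pow, mul_pow, mul_pow, pow_add]
  field_simp

theorem binomial_tail_lower_bound_general (n k : ℕ) (p : ℝ) (hp0 : 0 < p)
    (hlow : p < (k : ℝ) / n) (hhigh : (k : ℝ) / n < 1) :
    (1 / Real.sqrt (2 * n)) * Real.exp (-(n : ℝ) * relEntropy ((k : ℝ) / n) p)
      ≤ ∑ i ∈ Finset.Icc k n, (n.choose i : ℝ) * p ^ i * (1 - p) ^ (n - i) := by
  have hk : k ≠ 0 := by rintro rfl; simp at hlow; linarith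
  have hkn : k < n := by
    have hn : (0 : ℝ) < n := by
      by_contra! h
      simp [le_antisymm h n.cast_nonneg] at hlow
      linarith
    exact_mod_cast (div_lt_one hn).1 hhigh
  obtain ⟨j, rfl⟩ := Nat.exists_eq_add_of_le hkn.le
  have hj : j ≠ 0 := by omega
  have hp1 : p < 1 := hlow.trans hhigh
  calc 1 / √(2 * ((k + j : ℕ) : ℝ)) * exp (-((k + j : ℕ) : ℝ) * relEntropy (k / (k + j : ℕ)) p)
      = ((k + j : ℕ) : ℝ) ^ (k + j) / (√(2 * (k + j : ℕ)) * k ^ k * j ^ j)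
          * (p ^ k * (1 - p) ^ j) := by
        rw [exp_neg_mul_relEntropy hk hj hp0 hp1]; ring
    _ ≤ (k + j).choose k * (p ^ k * (1 - p) ^ j) := by
        gcongr
        exact entropy_div_sqrt_le_choose hk hj
    _ = (k + j).choose k * p ^ k * (1 - p) ^ (k + j - k) := by
        rw [Nat.add_sub_cancel_left, mul_assoc]
    _ ≤ ∑ i ∈ Finset.Icc k (k + j), ((k + j).choose i : ℝ) * p ^ i * (1 - p) ^ (k + j - i) :=
        Finset.single_le_sum (f := fun i => ((k + j).choose i : ℝ) * p ^ i * (1 - p) ^ (k + j - i))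
          (fun i _ => mul_nonneg (mul_nonneg (by positivity) (pow_nonneg hp0.le _))
            (pow_nonneg (sub_nonneg.2 hp1.le) _))
          (Finset.mem_Icc.2 ⟨le_rfl, Nat.le_add_right k j⟩)

/-- Reverse Chernoff bound: for `X ~ B(n, p)` and `p < k/n < 1`,
`P(X ≥ k) ≥ (1/√(2n)) exp(-n D(k/n ‖ p))`. -/
theorem binomial_tail_lower_bound (n k : ℕ) (p : ℝ) (hp0 : 0 < p) (hp1 : p < 1)
    (hlow : p < (k : ℝ) / n) (hhigh : (k : ℝ) / n < 1) :
    (1 / Real.sqrt (2 * n)) * Real.exp (-(n : ℝ) * relEntropy ((k : ℝ) / n) p)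
      ≤ ∑ i ∈ Finset.Icc k n, (n.choose i : ℝ) * p ^ i * (1 - p) ^ (n - i) :=
  binomial_tail_lower_bound_general n k p hp0 hlow hhigh
end

section
/- In the corrupted interval model, the probability that a maximally distant optimal interval I' has |I △ I'| ≥ t is at most C·n·(4pq)^{t/2}/(p-q)^4 for some universal constant C > 0, uniformly over n ≥ 1, 0 ≤ t ≤ n, and 1/2 < p ≤ 1. -/
open MeasureTheory ProbabilityTheory Finset

set_option maxHeartbeats 2000000

/-- A set of consecutive integers. -/
def IsIntegerInterval (I : Finset ℕ) : Prop := ∃ a b, I = Finset.Icc a b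

/-- The corrupted value `v̄(I')` of an interval `I'`, where `I` is the true interval and
`flip i` tells whether the label of `i` was flipped. -/
def corruptedValue (I : Finset ℕ) (flip : ℕ → Bool) (I' : Finset ℕ) : ℤ :=
  ∑ i ∈ I', (if flip i then -1 else 1) * (if i ∈ I then 1 else -1)

/-- An interval `I' ⊆ {1,…,n}` is optimal if it maximizes `v̄` among all intervals. -/
def OptimalInterval (n : ℕ) (I : Finset ℕ) (flip : ℕ → Bool) (I' : Finset ℕ) : Prop :=
  IsIntegerInterval I' ∧ I' ⊆ Finset.Icc 1 n ∧
    ∀ I'', IsIntegerInterval I'' → I'' ⊆ Finset.Icc 1 n →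
      corruptedValue I flip I'' ≤ corruptedValue I flip I'

/-- `T = max{|I △ I'| : I' optimal}`, the worst symmetric difference of an optimal interval. -/
noncomputable def maxDeviation (n : ℕ) (I : Finset ℕ) (flip : ℕ → Bool) : ℕ :=
  sSup {m : ℕ | ∃ I', OptimalInterval n I flip I' ∧ (symmDiff I I').card = m}


/-- Geometric sum bound for injectively-indexed powers. -/
lemma aux_geom_inj {r : ℝ} (h0 : 0 ≤ r) (h1 : r < 1) (s : Finset ℕ) (f : ℕ → ℕ)
    (hinj : ∀ x ∈ s, ∀ y ∈ s, f x = f y → x = y) :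
    ∑ b ∈ s, r ^ (f b) ≤ 1 / (1 - r) := by
  have h1r : 0 < 1 - r := by linarith
  have himg : ∑ b ∈ s, r ^ f b = ∑ k ∈ s.image f, r ^ k := (Finset.sum_image hinj).symm
  rw [himg]
  set N := (s.image f).sup id + 1 with hN
  have hsub : s.image f ⊆ Finset.range N := by
    intro k hk
    simp only [Finset.mem_range, hN]
    exact Nat.lt_succ_of_le (Finset.le_sup (f := id) hk)
  have h2 : ∑ k ∈ s.image f, r ^ k ≤ ∑ k ∈ Finset.range N, r ^ k := by
    apply Finset.sum_le_sum_of_subset_of_nonneg hsub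
    intro i _ _; positivity
  have h3 : ∑ k ∈ Finset.range N, r ^ k ≤ 1 / (1 - r) := by
    rw [le_div_iff₀ h1r]
    have := geom_sum_mul r N
    have hrN : 0 ≤ r ^ N := by positivity
    nlinarith
  linarith

lemma aux_symmDiff_insert_card (I s : Finset ℕ) (x : ℕ) (hx : x ∉ s) :
    (x ∈ I → (symmDiff I s).card = (symmDiff I (insert x s)).card + 1) ∧
    (x ∉ I → (symmDiff I (insert x s)).card = (symmDiff I s).card + 1) := by
  constructor
  · intro hxI
    have h : symmDiff I (insert x s) = (symmDiff I s).erase x := by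
      ext y
      by_cases hxy : y = x
      · subst hxy
        simp [Finset.mem_symmDiff, hxI, hx]
      · simp [Finset.mem_symmDiff, Finset.mem_erase, hxy]
    have hxmem : x ∈ symmDiff I s := by simp [Finset.mem_symmDiff, hxI, hx]
    have hpos : 0 < (symmDiff I s).card := Finset.card_pos.mpr ⟨x, hxmem⟩
    rw [h, Finset.card_erase_of_mem hxmem]
    omega
  · intro hxI
    have h : symmDiff I (insert x s) = insert x (symmDiff I s) := by
      ext y
      by_cases hxy : y = x
      · subst hxy
        simp [Finset.mem_symmDiff, hxI, hx]
      · simp [Finset.mem_symmDiff, hxy]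
    have hxmem : x ∉ symmDiff I s := by simp [Finset.mem_symmDiff, hxI, hx]
    rw [h, Finset.card_insert_of_notMem hxmem]

lemma aux_J_up (I : Finset ℕ) (a b b' : ℕ) (hab : a ≤ b) (hbb : b ≤ b')
    (hmem : ∀ x, b < x → x ≤ b' → x ∉ I) :
    (symmDiff I (Finset.Icc a b')).card = (symmDiff I (Finset.Icc a b)).card + (b' - b) := by
  induction b', hbb using Nat.le_induction with
  | base => simp
  | succ m hm ih =>
    have hstep : (symmDiff I (Finset.Icc a (m + 1))).card
        = (symmDiff I (Finset.Icc a m)).card + 1 := by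
      have hIcc : Finset.Icc a (m + 1) = insert (m + 1) (Finset.Icc a m) :=
        (Finset.insert_Icc_right_eq_Icc_add_one (by omega)).symm
      have hnot : m + 1 ∉ Finset.Icc a m := by simp
      rw [hIcc]
      exact (aux_symmDiff_insert_card I (Finset.Icc a m) (m + 1) hnot).2
        (hmem (m + 1) (by omega) (by omega))
    have := ih (fun x hx hx' => hmem x hx (by omega))
    omega

lemma aux_J_down (I : Finset ℕ) (a b b' : ℕ) (hab : a ≤ b) (hbb : b ≤ b')
    (hmem : ∀ x, b < x → x ≤ b' → x ∈ I) :
    (symmDiff I (Finset.Icc a b)).card = (symmDiff I (Finset.Icc a b')).card + (b' - b) := by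
  induction b', hbb using Nat.le_induction with
  | base => simp
  | succ m hm ih =>
    have hstep : (symmDiff I (Finset.Icc a m)).card
        = (symmDiff I (Finset.Icc a (m + 1))).card + 1 := by
      have hIcc : Finset.Icc a (m + 1) = insert (m + 1) (Finset.Icc a m) :=
        (Finset.insert_Icc_right_eq_Icc_add_one (by omega)).symm
      have hnot : m + 1 ∉ Finset.Icc a m := by simp
      rw [hIcc]
      exact (aux_symmDiff_insert_card I (Finset.Icc a m) (m + 1) hnot).1
        (hmem (m + 1) (by omega) (by omega))
    have := ih (fun x hx hx' => hmem x hx (by omega))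
    omega

lemma aux_inner_sum {r : ℝ} (h0 : 0 ≤ r) (h1 : r < 1) (c d n t a : ℕ) :
    ∑ b ∈ (Finset.Icc 1 n).filter
        (fun b => a ≤ b ∧ t ≤ (symmDiff (Finset.Icc c d) (Finset.Icc a b)).card),
      r ^ ((symmDiff (Finset.Icc c d) (Finset.Icc a b)).card - t) ≤ 3 / (1 - r) := by
  set I := Finset.Icc c d with hI
  set J : ℕ → ℕ := fun b => (symmDiff I (Finset.Icc a b)).card with hJ
  set s := (Finset.Icc 1 n).filter (fun b => a ≤ b ∧ t ≤ J b) with hs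
  have hmem_s : ∀ x ∈ s, a ≤ x ∧ t ≤ J x := by
    intro x hx
    simp only [hs, Finset.mem_filter] at hx
    exact hx.2
  have split1 := Finset.sum_filter_add_sum_filter_not s (fun b => b < c)
      (fun b => r ^ (J b - t))
  have split2 := Finset.sum_filter_add_sum_filter_not (s.filter (fun b => ¬ b < c))
      (fun b => b ≤ d) (fun b => r ^ (J b - t))
  have key : ∀ (s' : Finset ℕ), s' ⊆ s →
      (∀ x ∈ s', ∀ y ∈ s', x < y → J y ≠ J x) →
      ∑ b ∈ s', r ^ (J b - t) ≤ 1 / (1 - r) := by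
    intro s' hsub hinj
    apply aux_geom_inj h0 h1
    intro x hx y hy hf
    by_contra hne
    have htx := (hmem_s x (hsub hx)).2
    have hty := (hmem_s y (hsub hy)).2
    rcases lt_trichotomy x y with h | h | h
    · exact hinj x hx y hy h (by omega)
    · exact hne h
    · exact hinj y hy x hx h (by omega)
  have hb1 : ∑ b ∈ s.filter (fun b => b < c), r ^ (J b - t) ≤ 1 / (1 - r) := by
    apply key _ (Finset.filter_subset _ _)
    intro x hx y hy hxy
    simp only [Finset.mem_filter] at hx hy
    have hax := (hmem_s x hx.1).1
    have hup := aux_J_up I a x y hax (le_of_lt hxy)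
      (fun z hz hz' => by simp only [hI, Finset.mem_Icc]; omega)
    have hup' : J y = J x + (y - x) := hup
    omega
  have hb2 : ∑ b ∈ (s.filter (fun b => ¬ b < c)).filter (fun b => b ≤ d),
      r ^ (J b - t) ≤ 1 / (1 - r) := by
    apply key _ ((Finset.filter_subset _ _).trans (Finset.filter_subset _ _))
    intro x hx y hy hxy
    simp only [Finset.mem_filter] at hx hy
    have hax := (hmem_s x hx.1.1).1
    have hdown := aux_J_down I a x y hax (le_of_lt hxy)
      (fun z hz hz' => by
        simp only [hI, Finset.mem_Icc]
        constructor
        · omega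
        · omega)
    have hdown' : J x = J y + (y - x) := hdown
    omega
  have hb3 : ∑ b ∈ (s.filter (fun b => ¬ b < c)).filter (fun b => ¬ b ≤ d),
      r ^ (J b - t) ≤ 1 / (1 - r) := by
    apply key _ ((Finset.filter_subset _ _).trans (Finset.filter_subset _ _))
    intro x hx y hy hxy
    simp only [Finset.mem_filter] at hx hy
    have hax := (hmem_s x hx.1.1).1
    have hup := aux_J_up I a x y hax (le_of_lt hxy)
      (fun z hz hz' => by simp only [hI, Finset.mem_Icc]; omega)
    have hup' : J y = J x + (y - x) := hup
    omega
  have h3 : (3 : ℝ) / (1 - r) = 1 / (1 - r) + (1 / (1 - r) + 1 / (1 - r)) := by ring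
  rw [h3]
  calc ∑ b ∈ s, r ^ (J b - t)
      = ∑ b ∈ s.filter (fun b => b < c), r ^ (J b - t)
        + ∑ b ∈ s.filter (fun b => ¬ b < c), r ^ (J b - t) := split1.symm
    _ ≤ 1 / (1 - r) + (1 / (1 - r) + 1 / (1 - r)) := by
        rw [← split2]
        exact add_le_add hb1 (add_le_add hb2 hb3)

lemma aux_event_bound {Ω : Type} [MeasurableSpace Ω] (μ : Measure Ω) [IsProbabilityMeasure μ]
    (p q : ℝ) (hq0 : 0 ≤ q) (hqp : q < p) (hpq : p + q = 1)
    (F : ℕ → Ω → Bool) (hF : ∀ i, Measurable (F i))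
    (hind : iIndepFun F μ)
    (hq : ∀ i, μ {ω | F i ω = true} = ENNReal.ofReal q) (D : Finset ℕ) :
    μ {ω | (0:ℝ) ≤ ∑ i ∈ D, (if F i ω then (1:ℝ) else -1)}
      ≤ ENNReal.ofReal ((2 * Real.sqrt (p * q)) ^ D.card) := by
  rcases eq_or_lt_of_le hq0 with hq0' | hqpos
  · -- q = 0 : flips a.s. never happen
    have hq0'' : q = 0 := hq0'.symm
    rcases Finset.eq_empty_or_nonempty D with hD | hD
    · subst hD
      simp only [Finset.card_empty, pow_zero, ENNReal.ofReal_one]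
      exact prob_le_one
    · have hcard : 0 < D.card := Finset.card_pos.mpr hD
      have hr : (2 * Real.sqrt (p * q)) ^ D.card = 0 := by
        rw [hq0'', mul_zero, Real.sqrt_zero, mul_zero]
        exact zero_pow (by omega)
      rw [hr, ENNReal.ofReal_zero]
      have hsub : {ω | (0:ℝ) ≤ ∑ i ∈ D, (if F i ω then (1:ℝ) else -1)}
          ⊆ ⋃ i ∈ D, {ω | F i ω = true} := by
        intro ω hω
        by_contra hcon
        have hall : ∀ i ∈ D, F i ω = false := by
          intro i hi
          by_contra h
          simp only [Bool.not_eq_false] at h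
          exact hcon (Set.mem_biUnion hi (show ω ∈ {ω | F i ω = true} from h))
        have hsum : ∑ i ∈ D, (if F i ω then (1:ℝ) else -1) = -(D.card : ℝ) := by
          have hc : ∀ i ∈ D, (if F i ω then (1:ℝ) else -1) = -1 :=
            fun i hi => by rw [hall i hi]; norm_num
          rw [Finset.sum_congr rfl hc, Finset.sum_const]
          simp
        simp only [Set.mem_setOf_eq, hsum] at hω
        have : (0:ℝ) < (D.card : ℝ) := by exact_mod_cast hcard
        linarith
      calc μ _ ≤ μ (⋃ i ∈ D, {ω | F i ω = true}) := measure_mono hsub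
        _ ≤ ∑ i ∈ D, μ {ω | F i ω = true} := measure_biUnion_finset_le D _
        _ = 0 := by simp [hq, hq0'']
  · -- main case : q > 0
    have hp : 0 < p := lt_trans hqpos hqp
    set t₀ := Real.log (Real.sqrt (p / q)) with ht₀def
    have hpq1 : 1 ≤ p / q := (one_le_div hqpos).mpr hqp.le
    have hsq1 : 1 ≤ Real.sqrt (p / q) := by
      rw [show (1:ℝ) = Real.sqrt 1 by simp]
      exact Real.sqrt_le_sqrt hpq1
    have ht₀ : 0 ≤ t₀ := Real.log_nonneg hsq1
    set X : ℕ → Ω → ℝ := fun i => (fun b : Bool => if b then (1:ℝ) else -1) ∘ F i with hXdef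
    have hXm : ∀ i, Measurable (X i) :=
      fun i => (measurable_of_countable _).comp (hF i)
    have hXind : iIndepFun X μ :=
      hind.comp _ (fun _ => measurable_of_countable _)
    have he : Real.exp t₀ = Real.sqrt (p / q) :=
      Real.exp_log (Real.sqrt_pos.mpr (div_pos hp hqpos))
    have hei : Real.exp (-t₀) = Real.sqrt (q / p) := by
      rw [Real.exp_neg, he, ← Real.sqrt_inv, inv_div]
    have h1 : q * Real.sqrt (p / q) = Real.sqrt (p * q) := by
      rw [show q * Real.sqrt (p / q) = Real.sqrt (q ^ 2) * Real.sqrt (p / q) by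
        rw [Real.sqrt_sq hq0], ← Real.sqrt_mul (sq_nonneg q)]
      congr 1
      field_simp
    have h2 : p * Real.sqrt (q / p) = Real.sqrt (p * q) := by
      rw [show p * Real.sqrt (q / p) = Real.sqrt (p ^ 2) * Real.sqrt (q / p) by
        rw [Real.sqrt_sq hp.le], ← Real.sqrt_mul (sq_nonneg p)]
      congr 1
      field_simp
    have hmgf : ∀ i, mgf (X i) μ t₀ = 2 * Real.sqrt (p * q) := by
      intro i
      have hset : MeasurableSet {ω | F i ω = true} := (hF i) (measurableSet_singleton true)
      have hfun : (fun ω => Real.exp (t₀ * X i ω))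
          = fun ω => Set.indicator {ω | F i ω = true}
              (fun _ => Real.exp t₀ - Real.exp (-t₀)) ω + Real.exp (-t₀) := by
        funext ω
        by_cases h : F i ω = true
        · simp [hXdef, Set.indicator_apply, Set.mem_setOf_eq, h, mul_one]
        · simp only [Bool.not_eq_true] at h
          simp [hXdef, Set.indicator_apply, Set.mem_setOf_eq, h, mul_neg_one]
      rw [mgf, hfun]
      rw [integral_add ((integrable_const _).indicator hset) (integrable_const _)]
      rw [integral_indicator_const _ hset, integral_const]
      rw [measureReal_def, measureReal_def, hq i, ENNReal.toReal_ofReal hq0]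
      simp only [measure_univ, ENNReal.toReal_one, smul_eq_mul, one_smul, one_mul]
      rw [he, hei]
      have hmul : q * (Real.sqrt (p / q) - Real.sqrt (q / p)) + Real.sqrt (q / p)
          = q * Real.sqrt (p / q) + p * Real.sqrt (q / p) := by
        linear_combination (-Real.sqrt (q / p)) * hpq
      rw [hmul, h1, h2]
      ring
    -- integrability
    have hSm : Measurable (fun ω => ∑ i ∈ D, X i ω) :=
      Finset.measurable_sum D (fun i _ => hXm i)
    have hXle : ∀ i ω, X i ω ≤ 1 := by
      intro i ω
      simp only [hXdef, Function.comp_apply]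
      by_cases h : F i ω <;> simp [h]
    have hint : Integrable (fun ω => Real.exp (t₀ * (∑ i ∈ D, X i) ω)) μ := by
      have hfun : (fun ω => Real.exp (t₀ * (∑ i ∈ D, X i) ω))
          = fun ω => Real.exp (t₀ * ∑ i ∈ D, X i ω) := by
        funext ω; rw [Finset.sum_apply]
      rw [hfun]
      apply Integrable.mono' (integrable_const (Real.exp (t₀ * D.card)))
      · exact ((hSm.const_mul t₀).exp).aestronglyMeasurable
      · filter_upwards with ω
        rw [Real.norm_eq_abs, abs_of_nonneg (Real.exp_nonneg _)]
        apply Real.exp_le_exp.mpr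
        apply mul_le_mul_of_nonneg_left _ ht₀
        calc ∑ i ∈ D, X i ω ≤ ∑ _i ∈ D, (1:ℝ) := Finset.sum_le_sum (fun i _ => hXle i ω)
          _ = D.card := by simp
    have hmarkov := measure_ge_le_exp_mul_mgf (μ := μ) (X := ∑ i ∈ D, X i) 0 ht₀ hint
    rw [hXind.mgf_sum hXm D] at hmarkov
    have hprod : ∏ i ∈ D, mgf (X i) μ t₀ = (2 * Real.sqrt (p * q)) ^ D.card := by
      rw [Finset.prod_congr rfl (fun i _ => hmgf i), Finset.prod_const]
    rw [hprod] at hmarkov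
    simp only [mul_zero, neg_zero, Real.exp_zero, one_mul] at hmarkov
    have hsetEq : {ω | (0:ℝ) ≤ ∑ i ∈ D, (if F i ω then (1:ℝ) else -1)}
        = {ω | (0:ℝ) ≤ (∑ i ∈ D, X i) ω} := by
      ext ω
      simp [Finset.sum_apply, hXdef]
    rw [hsetEq, ← ENNReal.ofReal_toReal (measure_ne_top μ _)]
    exact ENNReal.ofReal_le_ofReal hmarkov

lemma aux_corrupted_diff (I I' : Finset ℕ) (flip : ℕ → Bool) :
    corruptedValue I flip I' - corruptedValue I flip I
      = ∑ i ∈ symmDiff I I', (if flip i then (1:ℤ) else -1) := by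
  classical
  unfold corruptedValue
  have h1 : ∑ i ∈ I', (if flip i then (-1:ℤ) else 1) * (if i ∈ I then 1 else -1)
      = ∑ i ∈ I' ∩ I, (if flip i then (-1:ℤ) else 1) * (if i ∈ I then 1 else -1)
        + ∑ i ∈ I' \ I, (if flip i then (-1:ℤ) else 1) * (if i ∈ I then 1 else -1) :=
    (Finset.sum_inter_add_sum_sdiff I' I _).symm
  have h2 : ∑ i ∈ I, (if flip i then (-1:ℤ) else 1) * (if i ∈ I then 1 else -1)
      = ∑ i ∈ I ∩ I', (if flip i then (-1:ℤ) else 1) * (if i ∈ I then 1 else -1)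
        + ∑ i ∈ I \ I', (if flip i then (-1:ℤ) else 1) * (if i ∈ I then 1 else -1) :=
    (Finset.sum_inter_add_sum_sdiff I I' _).symm
  rw [h1, h2, Finset.inter_comm I' I]
  have h3 : ∑ i ∈ I' \ I, (if flip i then (-1:ℤ) else 1) * (if i ∈ I then 1 else -1)
      = ∑ i ∈ I' \ I, (if flip i then (1:ℤ) else -1) := by
    apply Finset.sum_congr rfl
    intro i hi
    have : i ∉ I := (Finset.mem_sdiff.mp hi).2
    rw [if_neg this]
    by_cases h : flip i <;> simp [h]
  have h4 : ∑ i ∈ I \ I', (if flip i then (-1:ℤ) else 1) * (if i ∈ I then 1 else -1)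
      = -∑ i ∈ I \ I', (if flip i then (1:ℤ) else -1) := by
    rw [← Finset.sum_neg_distrib]
    apply Finset.sum_congr rfl
    intro i hi
    have : i ∈ I := (Finset.mem_sdiff.mp hi).1
    rw [if_pos this]
    by_cases h : flip i <;> simp [h]
  rw [h3, h4]
  have h5 : symmDiff I I' = (I \ I') ∪ (I' \ I) := by
    rw [symmDiff_def, Finset.sup_eq_union]
  rw [h5, Finset.sum_union disjoint_sdiff_sdiff]
  ring

lemma aux_exists_optimal (n : ℕ) (I : Finset ℕ) (flip : ℕ → Bool) (t : ℕ)
    (hIn : I ⊆ Finset.Icc 1 n) (ht : 1 ≤ t) (h : t ≤ maxDeviation n I flip) :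
    ∃ I', OptimalInterval n I flip I' ∧ t ≤ (symmDiff I I').card := by
  classical
  have hbdd : BddAbove {m : ℕ | ∃ I', OptimalInterval n I flip I' ∧ (symmDiff I I').card = m} := by
    refine ⟨n, ?_⟩
    rintro m ⟨I', hI', rfl⟩
    have hsub : symmDiff I I' ⊆ Finset.Icc 1 n := by
      intro x hx
      rcases Finset.mem_symmDiff.mp hx with ⟨h1, _⟩ | ⟨h1, _⟩
      · exact hIn h1
      · exact hI'.2.1 h1
    calc (symmDiff I I').card ≤ (Finset.Icc 1 n).card := Finset.card_le_card hsub
      _ = n := by rw [Nat.card_Icc]; omega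
  have hne : {m : ℕ | ∃ I', OptimalInterval n I flip I' ∧ (symmDiff I I').card = m}.Nonempty := by
    by_contra hcon
    rw [Set.not_nonempty_iff_eq_empty] at hcon
    have hz : maxDeviation n I flip = 0 := by
      unfold maxDeviation
      rw [hcon]
      exact csSup_empty
    omega
  have hmem := Nat.sSup_mem hne hbdd
  obtain ⟨I', hI', hcard⟩ := hmem
  refine ⟨I', hI', ?_⟩
  have h' : t ≤ sSup {m : ℕ | ∃ I', OptimalInterval n I flip I' ∧ (symmDiff I I').card = m} := h
  omega

/-- In the corrupted interval model, `P(T ≥ t) ≤ C n (4pq)^{t/2}/(p-q)⁴` for a universal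
constant `C > 0`, uniformly over `n ≥ 1`, `0 ≤ t ≤ n` and `1/2 < p ≤ 1`. -/
theorem corrupted_interval_deviation_bound :
    ∃ C : ℝ, 0 < C ∧
      ∀ (Ω : Type) (_ : MeasurableSpace Ω) (μ : Measure Ω) (_ : IsProbabilityMeasure μ)
        (n t : ℕ) (p q : ℝ) (I : Finset ℕ) (F : ℕ → Ω → Bool),
        1 ≤ n → t ≤ n → 1 / 2 < p → p ≤ 1 → q = 1 - p →
        IsIntegerInterval I → I ⊆ Finset.Icc 1 n →
        (∀ i, Measurable (F i)) →
        iIndepFun F μ →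
        (∀ i, μ {ω | F i ω = true} = ENNReal.ofReal q) →
        μ {ω | t ≤ maxDeviation n I (fun i => F i ω)}
          ≤ ENNReal.ofReal (C * n * (4 * p * q) ^ ((t : ℝ) / 2) / (p - q) ^ 4) := by
  classical
  refine ⟨100, by norm_num, ?_⟩
  intro Ω _ μ _ n t p q I F hn htn hp2 hp1 hqdef hIint hIsub hFmeas hFind hFq
  have hq0 : 0 ≤ q := by rw [hqdef]; linarith
  have hqp : q < p := by rw [hqdef]; linarith
  have hpq : p + q = 1 := by rw [hqdef]; ring
  have hpqpos : 0 < p - q := by linarith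
  have hn1 : (1:ℝ) ≤ (n:ℝ) := by exact_mod_cast hn
  have hA4 : (0:ℝ) < (p - q)^4 := by positivity
  have hA1 : (p - q)^2 ≤ 1 := by nlinarith
  set r := 2 * Real.sqrt (p * q) with hrdef
  have hr0 : (0:ℝ) ≤ r := by positivity
  have hsq : (Real.sqrt (p*q))^2 = p*q := Real.sq_sqrt (by positivity)
  have hpq4 : p * q ≤ 1 / 4 := by nlinarith
  have hs12 : Real.sqrt (p * q) ≤ 1 / 2 := by
    nlinarith [Real.sqrt_nonneg (p*q)]
  have hr1' : r ≤ 1 := by rw [hrdef]; linarith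
  have hkey : (p - q)^2 ≤ 2 * (1 - r) := by
    nlinarith [Real.sqrt_nonneg (p*q)]
  have hr1 : r < 1 := by nlinarith
  have h1r : (0:ℝ) < 1 - r := by linarith
  -- identify (4pq)^{t/2} with r^t
  have hrt : (4 * p * q) ^ ((t:ℝ)/2) = r ^ t := by
    have h4pq : (0:ℝ) ≤ 4 * (p * q) := by positivity
    have hhalf : ((t:ℝ)/2) = (1/2 : ℝ) * (t:ℝ) := by ring
    rw [show 4 * p * q = 4 * (p * q) by ring, hhalf, Real.rpow_mul h4pq,
      ← Real.sqrt_eq_rpow, Real.sqrt_mul (by norm_num : (0:ℝ) ≤ 4),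
      show Real.sqrt 4 = 2 by
        rw [show (4:ℝ) = 2^2 by norm_num, Real.sqrt_sq (by norm_num : (0:ℝ) ≤ 2)],
      Real.rpow_natCast]
  by_cases ht0 : t = 0
  · subst ht0
    simp only [Nat.cast_zero, zero_div, Real.rpow_zero, mul_one]
    calc μ {ω | 0 ≤ maxDeviation n I (fun i => F i ω)} ≤ 1 := prob_le_one
      _ ≤ ENNReal.ofReal (100 * n / (p - q) ^ 4) := by
          rw [← ENNReal.ofReal_one]
          apply ENNReal.ofReal_le_ofReal
          rw [le_div_iff₀ hA4]
          nlinarith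
  have ht1 : 1 ≤ t := by omega
  obtain ⟨c, d, hIcd⟩ := hIint
  subst hIcd
  set I := Finset.Icc c d with hIdef
  set part1 : Finset (ℕ × ℕ) := (Finset.Icc 1 n ×ˢ Finset.Icc 1 n).filter
      (fun ab => ab.1 ≤ ab.2 ∧ t ≤ (symmDiff I (Finset.Icc ab.1 ab.2)).card) with hpart1
  set part2 : Finset (ℕ × ℕ) := ({(1,0)} : Finset (ℕ × ℕ)).filter
      (fun ab => t ≤ (symmDiff I (Finset.Icc ab.1 ab.2)).card) with hpart2
  set idx := part1 ∪ part2 with hidx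
  set Ev : ℕ × ℕ → Set Ω := fun ab =>
      {ω | (0:ℝ) ≤ ∑ i ∈ symmDiff I (Finset.Icc ab.1 ab.2), (if F i ω then (1:ℝ) else -1)}
      with hEv
  -- Step A : inclusion into the union of events
  have hincl : {ω | t ≤ maxDeviation n I (fun i => F i ω)} ⊆ ⋃ ab ∈ idx, Ev ab := by
    intro ω hω
    obtain ⟨I', hopt, hcard⟩ := aux_exists_optimal n I (fun i => F i ω) t hIsub ht1 hω
    have hle := hopt.2.2 I ⟨c, d, rfl⟩ hIsub
    have hdiffZ : (0:ℤ) ≤ ∑ i ∈ symmDiff I I', (if F i ω then (1:ℤ) else -1) := by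
      have h0 : (0:ℤ) ≤ corruptedValue I (fun i => F i ω) I'
          - corruptedValue I (fun i => F i ω) I := sub_nonneg.mpr hle
      rwa [aux_corrupted_diff] at h0
    have hdiffR : (0:ℝ) ≤ ∑ i ∈ symmDiff I I', (if F i ω then (1:ℝ) else -1) := by
      have hcast : ((∑ i ∈ symmDiff I I', (if F i ω then (1:ℤ) else -1) : ℤ) : ℝ)
          = ∑ i ∈ symmDiff I I', (if F i ω then (1:ℝ) else -1) := by
        push_cast
        apply Finset.sum_congr rfl
        intro i _
        split_ifs <;> norm_num
      rw [← hcast]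
      exact_mod_cast hdiffZ
    obtain ⟨a, b, hI'ab⟩ := hopt.1
    by_cases hI'e : I' = ∅
    · have hIcc10 : Finset.Icc 1 0 = (∅ : Finset ℕ) := by
        apply Finset.Icc_eq_empty
        omega
      have hmem_idx : ((1,0) : ℕ × ℕ) ∈ idx := by
        apply Finset.mem_union_right
        rw [hpart2]
        refine Finset.mem_filter.mpr ⟨Finset.mem_singleton_self _, ?_⟩
        show t ≤ (symmDiff I (Finset.Icc 1 0)).card
        rw [hIcc10, ← hI'e]
        exact hcard
      have hmem_ev : ω ∈ Ev (1,0) := by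
        show (0:ℝ) ≤ ∑ i ∈ symmDiff I (Finset.Icc 1 0), (if F i ω then (1:ℝ) else -1)
        rw [hIcc10, ← hI'e]
        exact hdiffR
      exact Set.mem_biUnion hmem_idx hmem_ev
    · have hne : I'.Nonempty := Finset.nonempty_iff_ne_empty.mpr hI'e
      have hab : a ≤ b := by
        rw [hI'ab] at hne
        exact Finset.nonempty_Icc.mp hne
      have hamem : a ∈ I' := by rw [hI'ab]; exact Finset.mem_Icc.mpr ⟨le_refl a, hab⟩
      have hbmem : b ∈ I' := by rw [hI'ab]; exact Finset.mem_Icc.mpr ⟨hab, le_refl b⟩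
      have ha := Finset.mem_Icc.mp (hopt.2.1 hamem)
      have hb := Finset.mem_Icc.mp (hopt.2.1 hbmem)
      have hmem_idx : ((a, b) : ℕ × ℕ) ∈ idx := by
        apply Finset.mem_union_left
        rw [hpart1]
        simp only [Finset.mem_filter, Finset.mem_product, Finset.mem_Icc]
        refine ⟨⟨⟨ha.1, ha.2⟩, ⟨hb.1, hb.2⟩⟩, hab, ?_⟩
        show t ≤ (symmDiff I (Finset.Icc a b)).card
        rw [← hI'ab]
        exact hcard
      have hmem_ev : ω ∈ Ev (a, b) := by
        show (0:ℝ) ≤ ∑ i ∈ symmDiff I (Finset.Icc a b), (if F i ω then (1:ℝ) else -1)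
        rw [← hI'ab]
        exact hdiffR
      exact Set.mem_biUnion hmem_idx hmem_ev
  -- Step B : union bound and Chernoff bound on each event
  have hmt : ∀ ab ∈ idx, t ≤ (symmDiff I (Finset.Icc ab.1 ab.2)).card := by
    intro ab hab
    rcases Finset.mem_union.mp hab with h | h
    · exact ((Finset.mem_filter.mp h).2).2
    · exact (Finset.mem_filter.mp h).2
  -- Step C : real combinatorial estimate
  have hsum_part1 : ∑ ab ∈ part1, r ^ ((symmDiff I (Finset.Icc ab.1 ab.2)).card - t)
      ≤ (n:ℝ) * (3 / (1 - r)) := by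
    rw [hpart1, Finset.sum_filter, Finset.sum_product]
    have hinner : ∀ a ∈ Finset.Icc 1 n,
        (∑ b ∈ Finset.Icc 1 n, if a ≤ b ∧ t ≤ (symmDiff I (Finset.Icc a b)).card
          then r ^ ((symmDiff I (Finset.Icc a b)).card - t) else 0) ≤ 3 / (1 - r) := by
      intro a _
      rw [← Finset.sum_filter]
      exact aux_inner_sum hr0 hr1 c d n t a
    calc ∑ a ∈ Finset.Icc 1 n, (∑ b ∈ Finset.Icc 1 n,
          if a ≤ b ∧ t ≤ (symmDiff I (Finset.Icc a b)).card
          then r ^ ((symmDiff I (Finset.Icc a b)).card - t) else 0)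
        ≤ ∑ _a ∈ Finset.Icc 1 n, 3 / (1 - r) := Finset.sum_le_sum hinner
      _ = (n:ℝ) * (3 / (1 - r)) := by
          rw [Finset.sum_const, Nat.card_Icc]
          simp [nsmul_eq_mul]
  have hsum_part2 : ∑ ab ∈ part2, r ^ ((symmDiff I (Finset.Icc ab.1 ab.2)).card - t) ≤ 1 := by
    rw [hpart2]
    calc ∑ ab ∈ ({(1,0)} : Finset (ℕ × ℕ)).filter
          (fun ab => t ≤ (symmDiff I (Finset.Icc ab.1 ab.2)).card),
          r ^ ((symmDiff I (Finset.Icc ab.1 ab.2)).card - t)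
        ≤ ∑ ab ∈ ({(1,0)} : Finset (ℕ × ℕ)),
            r ^ ((symmDiff I (Finset.Icc ab.1 ab.2)).card - t) := by
          apply Finset.sum_le_sum_of_subset_of_nonneg (Finset.filter_subset _ _)
          intro i _ _
          positivity
      _ = r ^ ((symmDiff I (Finset.Icc 1 0)).card - t) := Finset.sum_singleton _ _
      _ ≤ 1 := pow_le_one₀ hr0 hr1'
  have hdisj : Disjoint part1 part2 := by
    rw [Finset.disjoint_right]
    intro ab hab2 hab1
    rw [hpart2] at hab2
    have : ab = (1,0) := Finset.mem_singleton.mp (Finset.mem_filter.mp hab2).1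
    subst this
    rw [hpart1] at hab1
    have := (Finset.mem_product.mp (Finset.mem_filter.mp hab1).1).2
    simp at this
  have hreal : ∑ ab ∈ idx, r ^ (symmDiff I (Finset.Icc ab.1 ab.2)).card
      ≤ 100 * n * (4 * p * q) ^ ((t:ℝ)/2) / (p - q) ^ 4 := by
    have hsplit : ∑ ab ∈ idx, r ^ (symmDiff I (Finset.Icc ab.1 ab.2)).card
        = r ^ t * ∑ ab ∈ idx, r ^ ((symmDiff I (Finset.Icc ab.1 ab.2)).card - t) := by
      rw [Finset.mul_sum]
      apply Finset.sum_congr rfl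
      intro ab hab
      rw [← pow_add]
      congr 1
      have := hmt ab hab
      omega
    rw [hsplit, hidx, Finset.sum_union hdisj, hrt]
    have hbound : ∑ ab ∈ part1, r ^ ((symmDiff I (Finset.Icc ab.1 ab.2)).card - t)
        + ∑ ab ∈ part2, r ^ ((symmDiff I (Finset.Icc ab.1 ab.2)).card - t)
        ≤ (n:ℝ) * (3 / (1 - r)) + 1 := add_le_add hsum_part1 hsum_part2
    have hfinal : (n:ℝ) * (3 / (1 - r)) + 1 ≤ 100 * n / (p - q) ^ 4 := by
      have hA2 : (0:ℝ) < (p - q)^2 := by positivity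
      have g1 : (n:ℝ) * (3 / (1 - r)) ≤ 6 * n / (p - q)^2 := by
        rw [show (n:ℝ) * (3 / (1 - r)) = 3 * n / (1 - r) by ring, div_le_div_iff₀ h1r hA2]
        nlinarith [mul_le_mul_of_nonneg_left hkey (show (0:ℝ) ≤ 3 * (n:ℝ) by positivity)]
      have hpq1' : p - q ≤ 1 := by linarith
      have h44 : (p - q)^4 ≤ (p - q)^2 :=
        pow_le_pow_of_le_one (le_of_lt hpqpos) hpq1' (by norm_num)
      have g2 : 6 * (n:ℝ) / (p - q)^2 ≤ 6 * n / (p - q)^4 :=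
        div_le_div_of_nonneg_left (by positivity) hA4 h44
      have g3 : (1:ℝ) ≤ (n:ℝ) / (p - q)^4 := by
        rw [le_div_iff₀ hA4]
        linarith [h44]
      calc (n:ℝ) * (3 / (1 - r)) + 1
          ≤ 6 * (n:ℝ) / (p - q)^4 + (n:ℝ) / (p - q)^4 := add_le_add (g1.trans g2) g3
        _ = 7 * (n:ℝ) / (p - q)^4 := by ring
        _ ≤ 100 * n / (p - q)^4 := (div_le_div_iff_of_pos_right hA4).mpr (by linarith)
    calc r ^ t * (∑ ab ∈ part1, r ^ ((symmDiff I (Finset.Icc ab.1 ab.2)).card - t)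
          + ∑ ab ∈ part2, r ^ ((symmDiff I (Finset.Icc ab.1 ab.2)).card - t))
        ≤ r ^ t * ((n:ℝ) * (3 / (1 - r)) + 1) := by
          apply mul_le_mul_of_nonneg_left hbound (by positivity)
      _ ≤ r ^ t * (100 * n / (p - q) ^ 4) := by
          apply mul_le_mul_of_nonneg_left hfinal (by positivity)
      _ = 100 * n * r ^ t / (p - q) ^ 4 := by ring
  -- assemble
  calc μ {ω | t ≤ maxDeviation n I (fun i => F i ω)}
      ≤ μ (⋃ ab ∈ idx, Ev ab) := measure_mono hincl
    _ ≤ ∑ ab ∈ idx, μ (Ev ab) := measure_biUnion_finset_le idx Ev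
    _ ≤ ∑ ab ∈ idx, ENNReal.ofReal (r ^ (symmDiff I (Finset.Icc ab.1 ab.2)).card) := by
        apply Finset.sum_le_sum
        intro ab _
        have := aux_event_bound μ p q hq0 hqp hpq F hFmeas hFind hFq
          (symmDiff I (Finset.Icc ab.1 ab.2))
        exact this
    _ = ENNReal.ofReal (∑ ab ∈ idx, r ^ (symmDiff I (Finset.Icc ab.1 ab.2)).card) :=
        (ENNReal.ofReal_sum_of_nonneg (fun ab _ => by positivity)).symm
    _ ≤ ENNReal.ofReal (100 * n * (4 * p * q) ^ ((t:ℝ)/2) / (p - q) ^ 4) :=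
        ENNReal.ofReal_le_ofReal hreal
end
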